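/- The Dedekind sum satisfies the reciprocity law: for coprime positive integers h and k, s(h, k) + s(k, h) = −1/4 + (1/12)(h/k + k/h + 1/(hk)). -/

import Mathlib

/-- The Dedekind sum `s(h, k) = ∑_{r=1}^{k-1} (r/k)(hr/k − ⌊hr/k⌋ − 1/2)`. -/
noncomputable def dedekindSum (h : ℤ) (k : ℕ) : ℚ :=
  ∑ r ∈ Finset.Ico 1 k,
    ((r : ℚ) / k) * (((h : ℚ) * r) / k - ⌊((h : ℚ) * r) / k⌋ - 1 / 2)

/-!
Write `q_r = ⌊hr/k⌋`, so that `hr mod k = hr - k q_r` and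
`k² s(h,k) = h Σ r² - k Σ r q_r - k Σ r / 2`. As `r ↦ hr mod k` permutes `1, …, k-1`, summing the
residues and their squares determines `Σ q_r` and expresses `Σ r q_r` through `Σ q_r²`. Summing `s`
over the lattice points `(r, s)` of the open rectangle `(0,k) × (0,h)`, none of which lies on the
diagonal `hr = ks`, splits `(k-1) h(h-1)/2` into `Σ_s s ⌊ks/h⌋` and `Σ_r q_r(q_r+1)/2`. This
expresses the sum `Σ_s s ⌊ks/h⌋` occurring in `h² s(k,h)` through the same quantities, and
eliminating them gives the reciprocity law.
-/

open Finset

theorem sum_Ico_one_natCast (n : ℕ) : ∑ r ∈ Ico 1 n, (r : ℚ) = n * (n - 1) / 2 := by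
  induction n with
  | zero => simp
  | succ n ih =>
    rcases n.eq_zero_or_pos with rfl | hn
    · simp
    · rw [sum_Ico_succ_top hn, ih]; push_cast; ring

theorem sum_Ico_one_natCast_sq (n : ℕ) :
    ∑ r ∈ Ico 1 n, (r : ℚ) ^ 2 = n * (n - 1) * (2 * n - 1) / 6 := by
  induction n with
  | zero => simp
  | succ n ih =>
    rcases n.eq_zero_or_pos with rfl | hn
    · simp
    · rw [sum_Ico_succ_top hn, ih]; push_cast; ring

theorem Nat.cast_mod_eq_sub_mul_div {R : Type*} [Ring R] (n k : ℕ) :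
    ((n % k : ℕ) : R) = n - k * (n / k : ℕ) := by
  rw [eq_sub_iff_add_eq, ← Nat.cast_mul, ← Nat.cast_add, Nat.mod_add_div]

theorem Ico_one_filter_mul_le {a b n : ℕ} (ha : 0 < a) (hb : b / a < n) :
    {x ∈ Ico 1 n | a * x ≤ b} = Ico 1 (b / a + 1) := by
  ext x
  simp only [mem_filter, mem_Ico, mul_comm a, ← Nat.le_div_iff_mul_le ha]
  omega

namespace Nat.Coprime

variable {h k : ℕ}

theorem mul_ne_mul {r s : ℕ} (hcop : h.Coprime k) (hs : 0 < s) (hsh : s < h) :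
    h * r ≠ k * s := fun hrs =>
  absurd (Nat.le_of_dvd hs (hcop.dvd_of_dvd_mul_left ⟨r, hrs.symm⟩)) (by omega)

theorem sum_Ico_one_comp_mul_mod {M : Type*} [AddCommMonoid M] (hcop : h.Coprime k)
    (f : ℕ → M) : ∑ r ∈ Ico 1 k, f (h * r % k) = ∑ r ∈ Ico 1 k, f r := by
  have maps : Set.MapsTo (h * · % k) (Ico 1 k : Set ℕ) (Ico 1 k) := by
    intro r hr
    simp only [coe_Ico, Set.mem_Ico] at hr ⊢
    refine ⟨Nat.pos_of_ne_zero fun h0 => ?_, Nat.mod_lt _ (by omega)⟩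
    have := Nat.le_of_dvd (by omega) (hcop.symm.dvd_of_dvd_mul_left (Nat.dvd_of_mod_eq_zero h0))
    omega
  have inj : Set.InjOn (h * · % k) (Ico 1 k) := by
    intro a ha b hb hab
    simp only [coe_Ico, Set.mem_Ico] at ha hb
    exact (Nat.ModEq.cancel_left_of_coprime hcop.symm hab).eq_of_lt_of_lt ha.2 hb.2
  exact sum_nbij _ maps inj (surjOn_of_injOn_of_card_le _ maps inj le_rfl) fun _ _ => rfl

theorem sum_Ico_one_mul_div (hcop : h.Coprime k) (hk : 0 < k) :
    ∑ r ∈ Ico 1 k, ((h * r / k : ℕ) : ℚ) = (h - 1) * (k - 1) / 2 := by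
  have hperm := hcop.sum_Ico_one_comp_mul_mod (fun n => (n : ℚ))
  simp only [Nat.cast_mod_eq_sub_mul_div, Nat.cast_mul, sum_sub_distrib, ← mul_sum,
    sum_Ico_one_natCast] at hperm
  apply mul_left_cancel₀ (show (k : ℚ) ≠ 0 by positivity)
  linear_combination -hperm

theorem sum_Ico_one_sq_mul_mod (hcop : h.Coprime k) :
    h ^ 2 * ∑ r ∈ Ico 1 k, (r : ℚ) ^ 2 - 2 * h * k * ∑ r ∈ Ico 1 k, (r : ℚ) * (h * r / k : ℕ)
      + k ^ 2 * ∑ r ∈ Ico 1 k, ((h * r / k : ℕ) : ℚ) ^ 2 = ∑ r ∈ Ico 1 k, (r : ℚ) ^ 2 := by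
  conv_rhs => rw [← hcop.sum_Ico_one_comp_mul_mod (fun n => (n : ℚ) ^ 2)]
  rw [mul_sum, mul_sum, mul_sum, ← sum_sub_distrib, ← sum_add_distrib]
  exact sum_congr rfl fun r _ => by rw [Nat.cast_mod_eq_sub_mul_div]; push_cast; ring

theorem sum_weighted_lattice_points (hcop : h.Coprime k) (hh : 0 < h) (hk : 0 < k) :
    2 * ∑ s ∈ Ico 1 h, (s : ℚ) * (k * s / h : ℕ)
      + ∑ r ∈ Ico 1 k, ((h * r / k : ℕ) : ℚ) ^ 2 + ∑ r ∈ Ico 1 k, ((h * r / k : ℕ) : ℚ)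
      = (k - 1) * h * (h - 1) := by
  have below : ∑ r ∈ Ico 1 k, ∑ s ∈ Ico 1 h with h * r ≤ k * s, (s : ℚ)
      = ∑ s ∈ Ico 1 h, (s : ℚ) * (k * s / h : ℕ) := by
    simp_rw [sum_filter]
    rw [sum_comm]
    refine sum_congr rfl fun s hs => ?_
    have hks : k * s / h < k := Nat.div_lt_of_lt_mul (by nlinarith [(mem_Ico.1 hs).2])
    rw [← sum_filter, sum_const, Ico_one_filter_mul_le hh hks, Nat.card_Ico, nsmul_eq_mul]
    push_cast; ring
  have above : ∀ r ∈ Ico 1 k, ∑ s ∈ Ico 1 h with ¬ h * r ≤ k * s, (s : ℚ)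
      = (((h * r / k : ℕ) : ℚ) ^ 2 + (h * r / k : ℕ)) / 2 := by
    intro r hr
    rw [mem_Ico] at hr
    rw [filter_congr (q := (k * · ≤ h * r)) fun s hs => by
      have := hcop.mul_ne_mul (r := r) (mem_Ico.1 hs).1 (mem_Ico.1 hs).2; omega,
      Ico_one_filter_mul_le hk (Nat.div_lt_of_lt_mul (by nlinarith)), sum_Ico_one_natCast]
    push_cast; ring
  have rect := sum_congr rfl fun r (_ : r ∈ Ico 1 k) =>
    (sum_filter_add_sum_filter_not (Ico 1 h) (h * r ≤ k * ·) (fun s => (s : ℚ))).symm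
  rw [sum_add_distrib, below, sum_congr rfl above, ← sum_div, sum_add_distrib] at rect
  simp only [sum_const, Nat.card_Ico, nsmul_eq_mul, sum_Ico_one_natCast] at rect
  push_cast [hk] at rect
  linear_combination -2 * rect

end Nat.Coprime

theorem dedekindSum_natCast (h k : ℕ) :
    dedekindSum h k =
      (h * ∑ r ∈ Ico 1 k, (r : ℚ) ^ 2 - k * ∑ r ∈ Ico 1 k, (r : ℚ) * (h * r / k : ℕ)) / k ^ 2
        - (∑ r ∈ Ico 1 k, (r : ℚ)) / (2 * k) := by
  rw [dedekindSum, mul_sum, mul_sum, ← sum_sub_distrib, sum_div, sum_div, ← sum_sub_distrib]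
  refine sum_congr rfl fun r hr => ?_
  have hk : (k : ℚ) ≠ 0 := Nat.cast_ne_zero.2 (by grind)
  rw [Int.cast_natCast, ← Nat.cast_mul, Rat.floor_natCast_div_natCast, ← Int.natCast_div,
    Int.cast_natCast]
  field_simp
  push_cast
  ring

/-- Dedekind sum reciprocity: for coprime positive integers `h` and `k`,
`s(h,k) + s(k,h) = −1/4 + (1/12)(h/k + k/h + 1/(hk))`. -/
theorem dedekindSum_reciprocity (h k : ℕ) (hh : 0 < h) (hk : 0 < k)
    (hcop : Nat.gcd h k = 1) :
    dedekindSum (h : ℤ) k + dedekindSum (k : ℤ) h =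
      -1 / 4 + (1 / 12) * ((h : ℚ) / k + (k : ℚ) / h + 1 / ((h : ℚ) * k)) := by
  have hsq := Nat.Coprime.sum_Ico_one_sq_mul_mod hcop
  have hdiv := Nat.Coprime.sum_Ico_one_mul_div hcop hk
  have hlat := Nat.Coprime.sum_weighted_lattice_points hcop hh hk
  rw [dedekindSum_natCast, dedekindSum_natCast]
  simp only [sum_Ico_one_natCast, sum_Ico_one_natCast_sq] at hsq ⊢
  have hh' : (h : ℚ) ≠ 0 := by positivity
  have hk' : (k : ℚ) ≠ 0 := by positivity
  linear_combination (norm := skip)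
    1 / (2 * h * k ^ 2) * hsq - 1 / (2 * h) * hlat + 1 / (2 * h) * hdiv
  field_simp
  ring
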